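/- arXiv:2310.06253 — 2 statements merged into one kernel-verified Lean document; each statement's English description precedes it below -/
import Mathlib

section
/- If the value-function class 𝒱 spans all of ℝ^S (e.g., contains the indicator functions of all states) and Π contains, for each action a, the deterministic policy that always plays a, then the only model value-equivalent to M with respect to (Π, 𝒱) is M itself. -/
theorem sum_ite_mul_sum_mul_ite_eq {S A R : Type*} [Fintype S] [Fintype A] [DecidableEq S]
    [DecidableEq A] [NonAssocSemiring R] (f : A → S → R) (a : A) (s' : S) :
    ∑ a', (if a' = a then (1 : R) else 0) * ∑ x, f a' x * (if x = s' then (1 : R) else 0) =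
      f a s' := by
  simp only [mul_ite, mul_one, mul_zero, ite_mul, one_mul, zero_mul, Finset.sum_ite_eq',
    Finset.mem_univ, if_true]

/-- If the value-function class contains all state indicators and the policy
class contains all deterministic constant-action policies, then the only
value-equivalent model is the true model M itself. -/
theorem value_equivalence_identifiability {S A : Type} [Fintype S] [Fintype A]
    [DecidableEq S] [DecidableEq A]
    (M Mhat : S → A → S → ℝ)
    (Pol : Set (S → A → ℝ)) (𝒱 : Set (S → ℝ))
    (hind : ∀ s' : S, (fun x => if x = s' then (1 : ℝ) else 0) ∈ 𝒱)
    (hdet : ∀ a : A, (fun _ a' => if a' = a then (1 : ℝ) else 0) ∈ Pol)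
    (hVE : ∀ π ∈ Pol, ∀ V ∈ 𝒱, ∀ s : S,
      (∑ a, π s a * ∑ s', Mhat s a s' * V s') = ∑ a, π s a * ∑ s', M s a s' * V s') :
    Mhat = M := by
  funext s a s'
  have h := hVE _ (hdet a) _ (hind s') s
  rwa [sum_ite_mul_sum_mul_ite_eq (Mhat s), sum_ite_mul_sum_mul_ite_eq (M s)] at h
end

section
/- Policy evaluation error bound (simulation lemma with policy shift): given an MDP with |R(s,a)| ≤ R_max and dynamics M, behavior policy π_b, learned model M̂ with E_{(s,a)∼d_M^{π_b}} D_KL[M(·|s,a) ∥ M̂(·|s,a)] ≤ ε_M̂, and any policy π with max_s D_KL[π(·|s) ∥ π_b(·|s)] ≤ ε_π, the evaluation error satisfies |J_{M̂}(π) − J_M(π)| ≤ (√2 γ R_max/(1−γ)²)√ε_M̂ + (2√2 γ R_max/(1−γ)²)√ε_π. -/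
/-!
Let `V̂, V` be the values of `π` under `M̂, M`, with `Q`-functions `Q̂, Q`, and let `w` be the state
marginal of the occupancy `d` of `π_b` under `M`. Pairing the Bellman equations of `V̂` and `V` with
the flow equation of `d` telescopes to
`(1 - γ) (Ĵ - J) = ∑ₛ w(s) ∑ₐ (π - π_b)(Q̂ - Q) - γ ∑ d(s,a) ∑ₛ' (M - M̂)(s'|s,a) V̂(s')`.
Both values are bounded by `R_max / (1 - γ)`, so each term is an `ℓ¹` distance times a sup norm.
Pinsker's inequality, obtained from `3 (x - 1)² ≤ 2 (x + 2) (x log x - x + 1)` by Cauchy–Schwarz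
with weights `p + 2q`, bounds these distances by `√(2 KL)`, and Jensen for `√` averages them
against `d`.
-/

open Finset InformationTheory

lemma hasDerivAt_klFun_sub_div {y : ℝ} (hy : 0 < y) :
    HasDerivAt (fun x => klFun x - 3 * (x - 1) ^ 2 / (2 * (x + 2)))
      (Real.log y - 3 * ((y - 1) * (y + 5)) / (2 * (y + 2) ^ 2)) y := by
  have hy2 : 2 * (y + 2) ≠ 0 := by positivity
  have h := (hasDerivAt_klFun hy.ne').fun_sub
    ((((hasDerivAt_id y).sub_const 1).fun_pow 2).const_mul 3 |>.fun_div
      (((hasDerivAt_id y).add_const 2).const_mul 2) hy2)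
  refine h.congr_deriv ?_
  simp only [id]
  field_simp
  ring

lemma hasDerivAt_log_sub_div {y : ℝ} (hy : 0 < y) :
    HasDerivAt (fun x => Real.log x - 3 * ((x - 1) * (x + 5)) / (2 * (x + 2) ^ 2))
      ((y - 1) ^ 2 * (y + 8) / (y * (y + 2) ^ 3)) y := by
  have hy2 : 2 * (y + 2) ^ 2 ≠ 0 := by positivity
  have h := (Real.hasDerivAt_log hy.ne').fun_sub
    ((((hasDerivAt_id y).sub_const 1).fun_mul ((hasDerivAt_id y).add_const 5)).const_mul 3
      |>.fun_div ((((hasDerivAt_id y).add_const 2).fun_pow 2).const_mul 2) hy2)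
  refine h.congr_deriv ?_
  simp only [id]
  field_simp
  ring

open Set in
/-- `g x = klFun x - 3 (x - 1)² / (2 (x + 2))` vanishes to second order at `1` and
`g'' x = (x - 1)² (x + 8) / (x (x + 2)³) ≥ 0`. -/
lemma three_mul_sq_sub_one_le_klFun {x : ℝ} (hx : 0 ≤ x) :
    3 * (x - 1) ^ 2 ≤ 2 * (x + 2) * klFun x := by
  set g : ℝ → ℝ := fun x => klFun x - 3 * (x - 1) ^ 2 / (2 * (x + 2))
  set h : ℝ → ℝ := fun x => Real.log x - 3 * ((x - 1) * (x + 5)) / (2 * (x + 2) ^ 2)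
  have h_mono : MonotoneOn h (Ioi 0) := by
    refine monotoneOn_of_hasDerivWithinAt_nonneg
      (f' := fun y => (y - 1) ^ 2 * (y + 8) / (y * (y + 2) ^ 3)) (convex_Ioi 0)
      (fun y hy => (hasDerivAt_log_sub_div hy).continuousAt.continuousWithinAt)
      (fun y hy => ?_) (fun y hy => ?_) <;> rw [interior_Ioi] at hy
    · exact (hasDerivAt_log_sub_div hy).hasDerivWithinAt
    · have : 0 < y := hy
      positivity
  have h_one : h 1 = 0 := by norm_num [h]
  have g_cont : ContinuousOn g (Ici 0) := by
    refine continuous_klFun.continuousOn.sub (ContinuousOn.div (by fun_prop) (by fun_prop) ?_)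
    intro y hy
    have : (0 : ℝ) ≤ y := hy
    positivity
  have g_anti : AntitoneOn g (Icc 0 1) := by
    refine antitoneOn_of_hasDerivWithinAt_nonpos (f' := h) (convex_Icc 0 1)
      (g_cont.mono Icc_subset_Ici_self) (fun y hy => ?_) (fun y hy => ?_) <;>
      rw [interior_Icc] at hy
    · exact (hasDerivAt_klFun_sub_div hy.1).hasDerivWithinAt
    · exact h_one ▸ h_mono hy.1 (mem_Ioi.2 one_pos) hy.2.le
  have g_mono : MonotoneOn g (Ici 1) := by
    refine monotoneOn_of_hasDerivWithinAt_nonneg (f' := h) (convex_Ici 1)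
      (g_cont.mono (Ici_subset_Ici.2 zero_le_one)) (fun y hy => ?_) (fun y hy => ?_) <;>
      rw [interior_Ici] at hy
    · exact (hasDerivAt_klFun_sub_div (one_pos.trans hy)).hasDerivWithinAt
    · exact h_one ▸ h_mono (mem_Ioi.2 one_pos) (mem_Ioi.2 (one_pos.trans hy)) hy.le
  have g_one : g 1 = 0 := by norm_num [g, klFun_one]
  have hg : 0 ≤ g x := by
    rcases le_total x 1 with hx1 | hx1
    · exact g_one ▸ g_anti ⟨hx, hx1⟩ ⟨zero_le_one, le_rfl⟩ hx1
    · exact g_one ▸ g_mono (mem_Ici.2 le_rfl) hx1 hx1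
  have hx2 : 0 < 2 * (x + 2) := by positivity
  have := (div_le_iff₀' hx2).1 (sub_nonneg.1 hg)
  linarith

lemma mul_klFun_div {p q : ℝ} (hq : q ≠ 0) :
    q * klFun (p / q) = p * Real.log (p / q) + q - p := by
  rw [klFun_apply]
  field_simp

lemma mul_log_div_add_sub_nonneg {p q : ℝ} (hp : 0 ≤ p) (hq : 0 ≤ q) (hpq : 0 < p → 0 < q) :
    0 ≤ p * Real.log (p / q) + q - p := by
  rcases hq.eq_or_lt' with rfl | hq
  · simp [le_antisymm (not_lt.1 (mt hpq (lt_irrefl 0))) hp]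
  · rw [← mul_klFun_div hq.ne']
    exact mul_nonneg hq.le (klFun_nonneg (div_nonneg hp hq.le))

lemma three_mul_sq_sub_le {p q : ℝ} (hp : 0 ≤ p) (hq : 0 ≤ q) (hpq : 0 < p → 0 < q) :
    3 * (p - q) ^ 2 ≤ 2 * (p + 2 * q) * (p * Real.log (p / q) + q - p) := by
  rcases hq.eq_or_lt' with rfl | hq
  · simp [le_antisymm (not_lt.1 (mt hpq (lt_irrefl 0))) hp]
  · have h := mul_le_mul_of_nonneg_left (three_mul_sq_sub_one_le_klFun (div_nonneg hp hq.le))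
      (sq_nonneg q)
    have e1 : q ^ 2 * (3 * (p / q - 1) ^ 2) = 3 * (p - q) ^ 2 := by
      field_simp
    have e2 : q ^ 2 * (2 * (p / q + 2) * klFun (p / q)) =
        2 * (p + 2 * q) * (q * klFun (p / q)) := by
      field_simp
    rw [← mul_klFun_div hq.ne', ← e1, ← e2]
    exact h

section Pinsker

variable {ι : Type*} [Fintype ι] {p q : ι → ℝ}

theorem sq_sum_abs_sub_le_two_mul_sum_mul_log (hp0 : ∀ i, 0 ≤ p i) (hq0 : ∀ i, 0 ≤ q i)
    (hp1 : ∑ i, p i = 1) (hq1 : ∑ i, q i = 1) (hpq : ∀ i, 0 < p i → 0 < q i) :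
    (∑ i, |p i - q i|) ^ 2 ≤ 2 * ∑ i, p i * Real.log (p i / q i) := by
  have h := sum_sq_le_sum_mul_sum_of_sq_le_mul univ
    (r := fun i => |p i - q i|) (f := fun i => p i + 2 * q i)
    (g := fun i => 2 / 3 * (p i * Real.log (p i / q i) + q i - p i))
    (fun i _ => by linarith [hp0 i, hq0 i])
    (fun i _ => by linarith [mul_log_div_add_sub_nonneg (hp0 i) (hq0 i) (hpq i)])
    (fun i _ => by linarith [sq_abs (p i - q i), three_mul_sq_sub_le (hp0 i) (hq0 i) (hpq i)])
  simp only [sum_add_distrib, ← mul_sum, sum_sub_distrib, hp1, hq1] at h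
  linarith

theorem sum_abs_sub_le_sqrt_two_mul_sum_mul_log (hp0 : ∀ i, 0 ≤ p i) (hq0 : ∀ i, 0 ≤ q i)
    (hp1 : ∑ i, p i = 1) (hq1 : ∑ i, q i = 1) (hpq : ∀ i, 0 < p i → 0 < q i) :
    ∑ i, |p i - q i| ≤ Real.sqrt (2 * ∑ i, p i * Real.log (p i / q i)) :=
  Real.le_sqrt_of_sq_le (sq_sum_abs_sub_le_two_mul_sum_mul_log hp0 hq0 hp1 hq1 hpq)

theorem sum_mul_log_div_nonneg (hp0 : ∀ i, 0 ≤ p i) (hq0 : ∀ i, 0 ≤ q i)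
    (hp1 : ∑ i, p i = 1) (hq1 : ∑ i, q i = 1) (hpq : ∀ i, 0 < p i → 0 < q i) :
    0 ≤ ∑ i, p i * Real.log (p i / q i) := by
  nlinarith [sq_sum_abs_sub_le_two_mul_sum_mul_log hp0 hq0 hp1 hq1 hpq,
    sq_nonneg (∑ i, |p i - q i|)]

end Pinsker

lemma abs_sum_mul_le_of_sum_eq_one {ι : Type*} [Fintype ι] {w x : ι → ℝ} {B : ℝ}
    (hw0 : ∀ i, 0 ≤ w i) (hw1 : ∑ i, w i = 1) (hx : ∀ i, |x i| ≤ B) :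
    |∑ i, w i * x i| ≤ B :=
  calc |∑ i, w i * x i| ≤ ∑ i, w i * B := by
        refine (abs_sum_le_sum_abs _ _).trans (sum_le_sum fun i _ => ?_)
        rw [abs_mul, abs_of_nonneg (hw0 i)]
        exact mul_le_mul_of_nonneg_left (hx i) (hw0 i)
    _ = B := by rw [← sum_mul, hw1, one_mul]

lemma abs_sum_mul_le_sum_abs_mul {ι : Type*} [Fintype ι] {f x : ι → ℝ} {B : ℝ}
    (hx : ∀ i, |x i| ≤ B) : |∑ i, f i * x i| ≤ (∑ i, |f i|) * B := by
  rw [sum_mul]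
  refine (abs_sum_le_sum_abs _ _).trans (sum_le_sum fun i _ => ?_)
  rw [abs_mul]
  exact mul_le_mul_of_nonneg_left (hx i) (abs_nonneg _)

theorem abs_sum_mul_sum_sub_mul_le {ι κ : Type*} [Fintype ι] [Fintype κ] {w : ι → ℝ}
    {p q f : ι → κ → ℝ} {B ε : ℝ} (hw0 : ∀ i, 0 ≤ w i) (hw1 : ∑ i, w i = 1)
    (hp0 : ∀ i k, 0 ≤ p i k) (hq0 : ∀ i k, 0 ≤ q i k) (hp1 : ∀ i, ∑ k, p i k = 1)
    (hq1 : ∀ i, ∑ k, q i k = 1) (hpq : ∀ i k, 0 < p i k → 0 < q i k)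
    (hf : ∀ i k, |f i k| ≤ B) (hB : 0 ≤ B)
    (hε : ∑ i, w i * ∑ k, p i k * Real.log (p i k / q i k) ≤ ε) :
    |∑ i, w i * ∑ k, (p i k - q i k) * f i k| ≤ B * Real.sqrt (2 * ε) := by
  set kl : ι → ℝ := fun i => ∑ k, p i k * Real.log (p i k / q i k)
  have hkl : ∀ i, 0 ≤ kl i := fun i =>
    sum_mul_log_div_nonneg (hp0 i) (hq0 i) (hp1 i) (hq1 i) (hpq i)
  have hpinsker : ∀ i, |∑ k, (p i k - q i k) * f i k| ≤ B * Real.sqrt (2 * kl i) := fun i =>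
    (abs_sum_mul_le_sum_abs_mul (hf i)).trans <| by
      rw [mul_comm B]
      exact mul_le_mul_of_nonneg_right
        (sum_abs_sub_le_sqrt_two_mul_sum_mul_log (hp0 i) (hq0 i) (hp1 i) (hq1 i) (hpq i)) hB
  have hjensen : ∑ i, w i * Real.sqrt (2 * kl i) ≤ Real.sqrt (∑ i, w i * (2 * kl i)) :=
    Real.strictConcaveOn_sqrt.concaveOn.le_map_sum (fun i _ => hw0 i) hw1
      (fun i _ => Set.mem_Ici.2 (mul_nonneg zero_le_two (hkl i)))
  calc |∑ i, w i * ∑ k, (p i k - q i k) * f i k|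
      ≤ ∑ i, w i * (B * Real.sqrt (2 * kl i)) := by
        refine (abs_sum_le_sum_abs _ _).trans (sum_le_sum fun i _ => ?_)
        rw [abs_mul, abs_of_nonneg (hw0 i)]
        exact mul_le_mul_of_nonneg_left (hpinsker i) (hw0 i)
    _ = B * ∑ i, w i * Real.sqrt (2 * kl i) := by
        rw [mul_sum]
        exact sum_congr rfl fun i _ => by ring
    _ ≤ B * Real.sqrt (2 * ε) := by
        refine mul_le_mul_of_nonneg_left (hjensen.trans (Real.sqrt_le_sqrt ?_)) hB
        simp only [mul_left_comm _ (2 : ℝ), ← mul_sum]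
        linarith

namespace FiniteMDP

section

variable {S A : Type*} [Fintype S]

def qFun (P : S → A → S → ℝ) (R : S → A → ℝ) (γ : ℝ) (V : S → ℝ) (s : S) (a : A) : ℝ :=
  R s a + γ * ∑ s', P s a s' * V s'

lemma abs_qFun_sub_qFun_le {P P' : S → A → S → ℝ} {R : S → A → ℝ} {γ B : ℝ} {V W : S → ℝ}
    (hγ0 : 0 ≤ γ) (hP0 : ∀ s a s', 0 ≤ P s a s') (hP1 : ∀ s a, ∑ s', P s a s' = 1)
    (hP'0 : ∀ s a s', 0 ≤ P' s a s') (hP'1 : ∀ s a, ∑ s', P' s a s' = 1) (hV : ∀ s, |V s| ≤ B)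
    (hW : ∀ s, |W s| ≤ B) (s : S) (a : A) :
    |qFun P R γ V s a - qFun P' R γ W s a| ≤ 2 * γ * B := by
  have hPV := abs_sum_mul_le_of_sum_eq_one (hP0 s a) (hP1 s a) hV
  have hP'W := abs_sum_mul_le_of_sum_eq_one (hP'0 s a) (hP'1 s a) hW
  rw [qFun, qFun, add_sub_add_left_eq_sub, ← mul_sub, abs_mul, abs_of_nonneg hγ0]
  nlinarith [abs_sub (∑ s', P s a s' * V s') (∑ s', P' s a s' * W s')]

end

variable {S A : Type*} [Fintype S] [Fintype A]

def bellman (P : S → A → S → ℝ) (π R : S → A → ℝ) (γ : ℝ) (V : S → ℝ) (s : S) : ℝ :=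
  ∑ a, π s a * qFun P R γ V s a

def inflow (P : S → A → S → ℝ) (μ : S → ℝ) (γ : ℝ) (d : S → A → ℝ) (s : S) : ℝ :=
  (1 - γ) * μ s + γ * ∑ s₀, ∑ a₀, d s₀ a₀ * P s₀ a₀ s

/-- The Bellman flow equation of the normalized discounted occupancy `d` of `π` under `P` from `μ`;
`inflow P μ γ d` is then the state marginal `s ↦ ∑ a, d s a`. -/
def IsOccupancy (P : S → A → S → ℝ) (π : S → A → ℝ) (μ : S → ℝ) (γ : ℝ) (d : S → A → ℝ) :
    Prop :=
  ∀ s a, d s a = π s a * inflow P μ γ d s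

lemma sum_sum_sum_mul_mul (d : S → A → ℝ) (P : S → A → S → ℝ) (V : S → ℝ) :
    ∑ s, (∑ s₀, ∑ a₀, d s₀ a₀ * P s₀ a₀ s) * V s = ∑ s, ∑ a, d s a * ∑ s', P s a s' * V s' := by
  simp only [sum_mul, mul_sum, mul_assoc]
  rw [sum_comm]
  exact sum_congr rfl fun _ _ => sum_comm

lemma sum_inflow_mul (P : S → A → S → ℝ) (μ : S → ℝ) (γ : ℝ) (d : S → A → ℝ) (V : S → ℝ) :
    ∑ s, inflow P μ γ d s * V s =
      (1 - γ) * ∑ s, μ s * V s + γ * ∑ s, ∑ a, d s a * ∑ s', P s a s' * V s' := by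
  simp only [inflow, add_mul, sum_add_distrib, mul_assoc, ← mul_sum, sum_sum_sum_mul_mul]

lemma sum_inflow (P : S → A → S → ℝ) (hP1 : ∀ s a, ∑ s', P s a s' = 1) (μ : S → ℝ) (γ : ℝ)
    (d : S → A → ℝ) :
    ∑ s, inflow P μ γ d s = (1 - γ) * ∑ s, μ s + γ * ∑ s, ∑ a, d s a := by
  simpa [hP1] using sum_inflow_mul P μ γ d 1

lemma sum_sum_sum_mul_eq {P : S → A → S → ℝ} (hP1 : ∀ s a, ∑ s', P s a s' = 1) (f : S → A → ℝ) :
    ∑ s, ∑ s₀, ∑ a₀, f s₀ a₀ * P s₀ a₀ s = ∑ s, ∑ a, f s a := by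
  simpa [hP1] using sum_sum_sum_mul_mul f P 1

lemma inflow_nonneg {P : S → A → S → ℝ} {μ : S → ℝ} {γ : ℝ} {d : S → A → ℝ} (hγ0 : 0 ≤ γ)
    (hγ1 : γ < 1) (hP0 : ∀ s a s', 0 ≤ P s a s') (hμ0 : ∀ s, 0 ≤ μ s)
    (hd0 : ∀ s a, 0 ≤ d s a) (s : S) :
    0 ≤ inflow P μ γ d s :=
  add_nonneg (mul_nonneg (sub_nonneg.2 hγ1.le) (hμ0 s)) <| mul_nonneg hγ0 <|
    sum_nonneg fun s₀ _ => sum_nonneg fun a₀ _ => mul_nonneg (hd0 s₀ a₀) (hP0 s₀ a₀ s)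

namespace IsOccupancy

variable {P : S → A → S → ℝ} {π : S → A → ℝ} {μ : S → ℝ} {γ : ℝ} {d : S → A → ℝ}

lemma sum_mul_eq_sum_inflow_mul (hd : IsOccupancy P π μ γ d) (hπ1 : ∀ s, ∑ a, π s a = 1)
    (f : S → ℝ) :
    ∑ s, ∑ a, d s a * f s = ∑ s, inflow P μ γ d s * f s := by
  refine sum_congr rfl fun s _ => ?_
  simp only [hd s, mul_assoc, ← sum_mul, hπ1, one_mul]

lemma sum_eq_one (hd : IsOccupancy P π μ γ d) (hγ1 : γ < 1) (hP1 : ∀ s a, ∑ s', P s a s' = 1)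
    (hπ1 : ∀ s, ∑ a, π s a = 1) (hμ1 : ∑ s, μ s = 1) :
    ∑ s, ∑ a, d s a = 1 := by
  have h := hd.sum_mul_eq_sum_inflow_mul hπ1 1
  simp only [Pi.one_apply, mul_one, sum_inflow P hP1, hμ1] at h
  have : (1 - γ) * ∑ s, ∑ a, d s a = (1 - γ) * 1 := by linarith
  exact mul_left_cancel₀ (by linarith) this

lemma sum_inflow_eq_one (hd : IsOccupancy P π μ γ d) (hγ1 : γ < 1)
    (hP1 : ∀ s a, ∑ s', P s a s' = 1) (hπ1 : ∀ s, ∑ a, π s a = 1) (hμ1 : ∑ s, μ s = 1) :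
    ∑ s, inflow P μ γ d s = 1 := by
  rw [sum_inflow P hP1, hμ1, hd.sum_eq_one hγ1 hP1 hπ1 hμ1]
  ring

lemma nonneg (hd : IsOccupancy P π μ γ d) (hγ0 : 0 ≤ γ) (hγ1 : γ < 1)
    (hP0 : ∀ s a s', 0 ≤ P s a s') (hP1 : ∀ s a, ∑ s', P s a s' = 1)
    (hπ0 : ∀ s a, 0 ≤ π s a) (hπ1 : ∀ s, ∑ a, π s a = 1) (hμ0 : ∀ s, 0 ≤ μ s) (s : S) (a : A) :
    0 ≤ d s a := by
  set n : S → A → ℝ := fun s a => max (-d s a) 0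
  have hn0 : ∀ s a, 0 ≤ n s a := fun s a => le_max_right _ _
  have hn : ∀ s a, n s a ≤ γ * (π s a * ∑ s₀, ∑ a₀, n s₀ a₀ * P s₀ a₀ s) := by
    intro s a
    have hflow : -∑ s₀, ∑ a₀, d s₀ a₀ * P s₀ a₀ s ≤ ∑ s₀, ∑ a₀, n s₀ a₀ * P s₀ a₀ s := by
      simp only [← sum_neg_distrib, ← neg_mul]
      exact sum_le_sum fun s₀ _ => sum_le_sum fun a₀ _ =>
        mul_le_mul_of_nonneg_right (le_max_left _ _) (hP0 s₀ a₀ s)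
    have hflow0 : 0 ≤ ∑ s₀, ∑ a₀, n s₀ a₀ * P s₀ a₀ s :=
      sum_nonneg fun s₀ _ => sum_nonneg fun a₀ _ => mul_nonneg (hn0 s₀ a₀) (hP0 s₀ a₀ s)
    refine max_le ?_ (mul_nonneg hγ0 (mul_nonneg (hπ0 s a) hflow0))
    rw [hd s a, inflow]
    nlinarith [mul_le_mul_of_nonneg_left hflow (mul_nonneg hγ0 (hπ0 s a)), hμ0 s, hπ0 s a,
      mul_nonneg (mul_nonneg (hπ0 s a) (sub_nonneg.2 hγ1.le)) (hμ0 s)]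
  have hN : ∑ s, ∑ a, n s a ≤ γ * ∑ s, ∑ a, n s a :=
    calc ∑ s, ∑ a, n s a ≤ ∑ s, ∑ a, γ * (π s a * ∑ s₀, ∑ a₀, n s₀ a₀ * P s₀ a₀ s) :=
          sum_le_sum fun s _ => sum_le_sum fun a _ => hn s a
      _ = γ * ∑ s, ∑ a, n s a := by
          simp only [← mul_sum, ← Finset.sum_mul, hπ1, one_mul, sum_sum_sum_mul_eq hP1]
  have hrow0 : ∀ s ∈ univ, 0 ≤ ∑ a, n s a := fun s _ => sum_nonneg fun a _ => hn0 s a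
  have hN0 : ∑ s, ∑ a, n s a = 0 := le_antisymm (by nlinarith [sum_nonneg hrow0]) (sum_nonneg hrow0)
  have hnsa : n s a = 0 :=
    (sum_eq_zero_iff_of_nonneg fun a _ => hn0 s a).1
      ((sum_eq_zero_iff_of_nonneg hrow0).1 hN0 s (mem_univ s)) a (mem_univ a)
  simpa [n] using hnsa

end IsOccupancy

section Bellman

variable {P : S → A → S → ℝ} {π R : S → A → ℝ} {γ : ℝ}

lemma bellman_sub_bellman (V W : S → ℝ) (s : S) :
    bellman P π R γ V s - bellman P π R γ W s =
      ∑ a, π s a * (γ * ∑ s', P s a s' * (V s' - W s')) := by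
  simp only [bellman, qFun, ← sum_sub_distrib, mul_sub]
  refine sum_congr rfl fun a _ => ?_
  rw [sum_sub_distrib]
  ring

lemma lipschitzWith_bellman (hγ0 : 0 ≤ γ) (hP0 : ∀ s a s', 0 ≤ P s a s')
    (hP1 : ∀ s a, ∑ s', P s a s' = 1) (hπ0 : ∀ s a, 0 ≤ π s a) (hπ1 : ∀ s, ∑ a, π s a = 1) :
    LipschitzWith ⟨γ, hγ0⟩ (bellman P π R γ) := by
  refine LipschitzWith.of_dist_le_mul fun V W => (dist_pi_le_iff (by positivity)).2 fun s => ?_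
  rw [Real.dist_eq, bellman_sub_bellman]
  refine abs_sum_mul_le_of_sum_eq_one (hπ0 s) (hπ1 s) fun a => ?_
  rw [abs_mul, abs_of_nonneg hγ0]
  exact mul_le_mul_of_nonneg_left (abs_sum_mul_le_of_sum_eq_one (hP0 s a) (hP1 s a)
    fun s' => by rw [← Real.dist_eq]; exact dist_le_pi_dist V W s') hγ0

theorem exists_bellman_eq_self (hγ0 : 0 ≤ γ) (hγ1 : γ < 1) (hP0 : ∀ s a s', 0 ≤ P s a s')
    (hP1 : ∀ s a, ∑ s', P s a s' = 1) (hπ0 : ∀ s a, 0 ≤ π s a) (hπ1 : ∀ s, ∑ a, π s a = 1)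
    {Rmax : ℝ} (hR : ∀ s a, |R s a| ≤ Rmax) (hRmax : 0 ≤ Rmax) :
    ∃ V, bellman P π R γ V = V ∧ ∀ s, |V s| ≤ Rmax / (1 - γ) := by
  have hT : ContractingWith ⟨γ, hγ0⟩ (bellman P π R γ) :=
    ⟨by exact_mod_cast hγ1, lipschitzWith_bellman hγ0 hP0 hP1 hπ0 hπ1⟩
  have hT0 : ‖bellman P π R γ 0‖ ≤ Rmax := (pi_norm_le_iff_of_nonneg hRmax).2 fun s =>
    abs_sum_mul_le_of_sum_eq_one (hπ0 s) (hπ1 s) fun a => by simpa [qFun] using hR s a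
  have hV : ‖hT.fixedPoint‖ ≤ Rmax / (1 - γ) := by
    have h := hT.dist_fixedPoint_le 0
    rw [dist_zero_left, dist_zero_left] at h
    exact h.trans (div_le_div_of_nonneg_right hT0 (sub_nonneg.2 hγ1.le))
  refine ⟨_, hT.fixedPoint_isFixedPt, fun s => ?_⟩
  rw [← Real.norm_eq_abs]
  exact (norm_le_pi_norm _ s).trans hV

end Bellman

theorem IsOccupancy.performance_difference {M P : S → A → S → ℝ} {π πb R : S → A → ℝ}
    {μ : S → ℝ} {γ : ℝ} {d : S → A → ℝ} {V : S → ℝ} (hd : IsOccupancy M πb μ γ d)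
    (hV : bellman P π R γ V = V) :
    ∑ s, inflow M μ γ d s * ∑ a, (π s a - πb s a) * qFun P R γ V s a =
      (1 - γ) * ∑ s, μ s * V s + γ * ∑ s, ∑ a, d s a * ∑ s', (M s a s' - P s a s') * V s' -
        ∑ s, ∑ a, d s a * R s a := by
  have hπ : ∑ s, inflow M μ γ d s * ∑ a, π s a * qFun P R γ V s a =
      (1 - γ) * ∑ s, μ s * V s + γ * ∑ s, ∑ a, d s a * ∑ s', M s a s' * V s' := by
    rw [← sum_inflow_mul]
    exact sum_congr rfl fun s _ => congrArg _ (congrFun hV s)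
  have hπb : ∑ s, inflow M μ γ d s * ∑ a, πb s a * qFun P R γ V s a =
      ∑ s, ∑ a, d s a * R s a + γ * ∑ s, ∑ a, d s a * ∑ s', P s a s' * V s' := by
    calc ∑ s, inflow M μ γ d s * ∑ a, πb s a * qFun P R γ V s a
        = ∑ s, ∑ a, d s a * qFun P R γ V s a := sum_congr rfl fun s _ => by
          rw [mul_sum]
          exact sum_congr rfl fun a _ => by rw [hd s a]; ring
      _ = _ := by simp only [qFun, mul_add, sum_add_distrib, mul_left_comm _ γ, ← mul_sum]
  have hsplit : ∑ s, inflow M μ γ d s * ∑ a, (π s a - πb s a) * qFun P R γ V s a =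
      ∑ s, inflow M μ γ d s * ∑ a, π s a * qFun P R γ V s a -
        ∑ s, inflow M μ γ d s * ∑ a, πb s a * qFun P R γ V s a := by
    simp only [sub_mul, sum_sub_distrib, mul_sub]
  have hMP : ∑ s, ∑ a, d s a * ∑ s', (M s a s' - P s a s') * V s' =
      ∑ s, ∑ a, d s a * ∑ s', M s a s' * V s' - ∑ s, ∑ a, d s a * ∑ s', P s a s' * V s' := by
    simp only [sub_mul, sum_sub_distrib, mul_sub]
  rw [hsplit, hπ, hπb, hMP]
  ring

theorem IsOccupancy.sum_mul_reward {P : S → A → S → ℝ} {π R : S → A → ℝ} {μ : S → ℝ} {γ : ℝ}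
    {d : S → A → ℝ} {V : S → ℝ} (hd : IsOccupancy P π μ γ d) (hV : bellman P π R γ V = V) :
    ∑ s, ∑ a, d s a * R s a = (1 - γ) * ∑ s, μ s * V s := by
  have h := hd.performance_difference hV
  simp only [sub_self, zero_mul, sum_const_zero, mul_zero, add_zero] at h
  linarith

theorem IsOccupancy.simulation_identity {M Mhat : S → A → S → ℝ} {π πb R : S → A → ℝ}
    {μ : S → ℝ} {γ : ℝ} {d : S → A → ℝ} {Vhat V : S → ℝ} (hd : IsOccupancy M πb μ γ d)
    (hVhat : bellman Mhat π R γ Vhat = Vhat) (hV : bellman M π R γ V = V) :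
    (1 - γ) * (∑ s, μ s * Vhat s - ∑ s, μ s * V s) =
      ∑ s, inflow M μ γ d s * ∑ a, (π s a - πb s a) * (qFun Mhat R γ Vhat s a - qFun M R γ V s a) -
        γ * ∑ s, ∑ a, d s a * ∑ s', (M s a s' - Mhat s a s') * Vhat s' := by
  have hhat := hd.performance_difference hVhat
  have h := hd.performance_difference hV
  simp only [sub_self, zero_mul, sum_const_zero, mul_zero, add_zero] at h
  simp only [mul_sub, sum_sub_distrib, hhat, h]
  ring

theorem IsOccupancy.simulation_bound {M Mhat : S → A → S → ℝ} {π πb R : S → A → ℝ}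
    {μ : S → ℝ} {γ B εM επ : ℝ} {d : S → A → ℝ} {Vhat V : S → ℝ} (hd : IsOccupancy M πb μ γ d)
    (hγ0 : 0 ≤ γ) (hγ1 : γ < 1) (hM0 : ∀ s a s', 0 ≤ M s a s') (hM1 : ∀ s a, ∑ s', M s a s' = 1)
    (hMh0 : ∀ s a s', 0 ≤ Mhat s a s') (hMh1 : ∀ s a, ∑ s', Mhat s a s' = 1)
    (hπ0 : ∀ s a, 0 ≤ π s a) (hπ1 : ∀ s, ∑ a, π s a = 1)
    (hπb0 : ∀ s a, 0 ≤ πb s a) (hπb1 : ∀ s, ∑ a, πb s a = 1)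
    (hμ0 : ∀ s, 0 ≤ μ s) (hμ1 : ∑ s, μ s = 1)
    (hacM : ∀ s a s', 0 < M s a s' → 0 < Mhat s a s') (hacπ : ∀ s a, 0 < π s a → 0 < πb s a)
    (hεM : ∑ s, ∑ a, d s a * ∑ s', M s a s' * Real.log (M s a s' / Mhat s a s') ≤ εM)
    (hεπ : ∀ s, ∑ a, π s a * Real.log (π s a / πb s a) ≤ επ)
    (hVhat : bellman Mhat π R γ Vhat = Vhat) (hV : bellman M π R γ V = V)
    (hVhatB : ∀ s, |Vhat s| ≤ B) (hVB : ∀ s, |V s| ≤ B) (hB : 0 ≤ B) :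
    (1 - γ) * |∑ s, μ s * Vhat s - ∑ s, μ s * V s| ≤
      2 * γ * B * Real.sqrt (2 * επ) + γ * (B * Real.sqrt (2 * εM)) := by
  have hd0 := hd.nonneg hγ0 hγ1 hM0 hM1 hπb0 hπb1 hμ0
  have hw0 := inflow_nonneg hγ0 hγ1 hM0 hμ0 hd0
  have hw1 := hd.sum_inflow_eq_one hγ1 hM1 hπb1 hμ1
  have hpolicy := abs_sum_mul_sum_sub_mul_le hw0 hw1 hπ0 hπb0 hπ1 hπb1 hacπ
    (abs_qFun_sub_qFun_le (R := R) hγ0 hMh0 hMh1 hM0 hM1 hVhatB hVB) (by positivity)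
    ((sum_le_sum fun s _ => mul_le_mul_of_nonneg_left (hεπ s) (hw0 s)).trans_eq
      (by rw [← sum_mul, hw1, one_mul]))
  have hmodel : |∑ s, ∑ a, d s a * ∑ s', (M s a s' - Mhat s a s') * Vhat s'| ≤
      B * Real.sqrt (2 * εM) := by
    have h := abs_sum_mul_sum_sub_mul_le (ι := S × A) (w := fun i => d i.1 i.2)
      (p := fun i => M i.1 i.2) (q := fun i => Mhat i.1 i.2) (f := fun _ => Vhat)
      (fun i => hd0 i.1 i.2) ((Fintype.sum_prod_type' _).trans (hd.sum_eq_one hγ1 hM1 hπb1 hμ1))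
      (fun i => hM0 i.1 i.2) (fun i => hMh0 i.1 i.2) (fun i => hM1 i.1 i.2)
      (fun i => hMh1 i.1 i.2) (fun i => hacM i.1 i.2) (fun _ => hVhatB) hB
      ((Fintype.sum_prod_type' _).trans_le hεM)
    simpa only [Fintype.sum_prod_type] using h
  rw [← abs_of_pos (sub_pos.2 hγ1), ← abs_mul, hd.simulation_identity hVhat hV]
  refine (abs_sub _ _).trans (add_le_add hpolicy ?_)
  rw [abs_mul, abs_of_nonneg hγ0]
  exact mul_le_mul_of_nonneg_left hmodel hγ0

end FiniteMDP

open FiniteMDP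

/-- Simulation lemma with policy shift (Lemma 3 of Xu et al.): if the model KL
error under the behavior occupancy is at most ε_M̂ and the policy divergence is
at most ε_π, then |J_{M̂}(π) − J_M(π)| ≤ (√2 γ R_max/(1−γ)²)√ε_M̂ +
(2√2 γ R_max/(1−γ)²)√ε_π. Occupancies are characterized by Bellman flow
equations and J_N(ρ) = (1/(1−γ)) Σ d_N^ρ R. -/
theorem simulation_lemma_policy_shift {S A : Type} [Fintype S] [Fintype A]
    (M Mhat : S → A → S → ℝ) (π πb : S → A → ℝ) (R : S → A → ℝ) (μ : S → ℝ)
    (γ Rmax εM επ : ℝ) (hγ0 : 0 ≤ γ) (hγ1 : γ < 1)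
    (hM0 : ∀ s a s', 0 ≤ M s a s') (hM1 : ∀ s a, ∑ s', M s a s' = 1)
    (hMh0 : ∀ s a s', 0 ≤ Mhat s a s') (hMh1 : ∀ s a, ∑ s', Mhat s a s' = 1)
    (hπ0 : ∀ s a, 0 ≤ π s a) (hπ1 : ∀ s, ∑ a, π s a = 1)
    (hπb0 : ∀ s a, 0 ≤ πb s a) (hπb1 : ∀ s, ∑ a, πb s a = 1)
    (hμ0 : ∀ s, 0 ≤ μ s) (hμ1 : ∑ s, μ s = 1)
    (hRmax : ∀ s a, |R s a| ≤ Rmax)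
    -- absolute continuity so the KL divergences are well defined
    (hacM : ∀ s a s', 0 < M s a s' → 0 < Mhat s a s')
    (hacπ : ∀ s a, 0 < π s a → 0 < πb s a)
    -- normalized occupancy of the behavior policy π_b under the true dynamics M
    (dMb : S → A → ℝ)
    (hdMb : ∀ s a, dMb s a =
      πb s a * ((1 - γ) * μ s + γ * ∑ s₀, ∑ a₀, dMb s₀ a₀ * M s₀ a₀ s))
    -- model error under the behavior occupancy, and policy divergence
    (hεM : (∑ s, ∑ a, dMb s a * ∑ s', M s a s' * Real.log (M s a s' / Mhat s a s')) ≤ εM)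
    (hεπ : ∀ s, (∑ a, π s a * Real.log (π s a / πb s a)) ≤ επ)
    -- returns of π under the learned model M̂ and under the true dynamics M
    (dhat dMpi : S → A → ℝ)
    (hdhat : ∀ s a, dhat s a =
      π s a * ((1 - γ) * μ s + γ * ∑ s₀, ∑ a₀, dhat s₀ a₀ * Mhat s₀ a₀ s))
    (hdMpi : ∀ s a, dMpi s a =
      π s a * ((1 - γ) * μ s + γ * ∑ s₀, ∑ a₀, dMpi s₀ a₀ * M s₀ a₀ s))
    (Jhat JM : ℝ)
    (hJhat : Jhat = (1 / (1 - γ)) * ∑ s, ∑ a, dhat s a * R s a)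
    (hJM : JM = (1 / (1 - γ)) * ∑ s, ∑ a, dMpi s a * R s a) :
    |Jhat - JM| ≤
      (Real.sqrt 2 * γ * Rmax / (1 - γ) ^ 2) * Real.sqrt εM +
        (2 * Real.sqrt 2 * γ * Rmax / (1 - γ) ^ 2) * Real.sqrt επ := by
  have hγ : 0 < 1 - γ := by linarith
  have hRmax0 : 0 ≤ Rmax := by
    obtain ⟨s, -, -⟩ := exists_ne_zero_of_sum_ne_zero (hμ1 ▸ one_ne_zero : ∑ s, μ s ≠ 0)
    obtain ⟨a, -, -⟩ := exists_ne_zero_of_sum_ne_zero ((hπ1 s) ▸ one_ne_zero : ∑ a, π s a ≠ 0)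
    exact (abs_nonneg _).trans (hRmax s a)
  obtain ⟨Vh, hVh, hVhB⟩ := exists_bellman_eq_self hγ0 hγ1 hMh0 hMh1 hπ0 hπ1 hRmax hRmax0
  obtain ⟨V, hV, hVB⟩ := exists_bellman_eq_self hγ0 hγ1 hM0 hM1 hπ0 hπ1 hRmax hRmax0
  have hJ : Jhat - JM = ∑ s, μ s * Vh s - ∑ s, μ s * V s := by
    rw [hJhat, hJM, IsOccupancy.sum_mul_reward hdhat hVh, IsOccupancy.sum_mul_reward hdMpi hV]
    field_simp
  have hbound := IsOccupancy.simulation_bound hdMb hγ0 hγ1 hM0 hM1 hMh0 hMh1 hπ0 hπ1 hπb0 hπb1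
    hμ0 hμ1 hacM hacπ hεM hεπ hVh hV hVhB hVB (div_nonneg hRmax0 hγ.le)
  rw [← hJ, Real.sqrt_mul zero_le_two, Real.sqrt_mul zero_le_two, ← le_div_iff₀' hγ] at hbound
  refine hbound.trans_eq ?_
  field_simp
  ring
end
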